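/- arXiv:1701.01154 — 4 statements merged into one kernel-verified Lean document; each statement's English description precedes it below -/
import Mathlib

section
/- Let n ≥ 1 and define the sequence s : ZMod (2^n) → H by s(a) = i^⌊a.val²/2^(n−1)⌋ · j^⌊2·a.val²/2^(n−1)⌋ (where ⌊·⌋ denotes the floor of the quotient, i.e. natural-number division). If τ ∈ ZMod (2^n) has odd representative τ.val, then the periodic autocorrelation θ_s(τ) = Σ_{a ∈ ZMod (2^n)} s(a)·(s(a+τ))* equals 0. -/
noncomputable def qi : Quaternion ℝ := ⟨0,1,0,0⟩
noncomputable def qj : Quaternion ℝ := ⟨0,0,1,0⟩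
noncomputable def qk : Quaternion ℝ := ⟨0,0,0,1⟩

/-!
Write `2^(n-1) = 2m`. For `n ≥ 2`, expanding `(x + 2m)^2` in the exponents and using `i^2 = -1`,
`j^4 = 1` gives `s(x + 2m) = (-1)^(x+m) s(x)`. Shifting the summation index by `2m` therefore
multiplies each term `s(a) s(a+τ)*` by `(-1)^(2(x+m)+τ) = -1`, so the autocorrelation equals its own
negative. For `n = 1` the sum is `1 · (-i)* + (-i) · 1 = 0`.
-/

open Function

theorem Function.Periodic.map_val_add_natCast {α : Type*} {f : ℕ → α} {N : ℕ} [NeZero N]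
    (hf : Periodic f N) (a : ZMod N) (d : ℕ) : f (a + d).val = f (a.val + d) := by
  rw [ZMod.val_add, ZMod.val_natCast, Nat.add_mod_mod, hf.map_mod_nat]

theorem ZMod.sum_val_eq_zero_of_antiperiodic {M : Type*} [AddCommGroup M] [IsAddTorsionFree M]
    {N d : ℕ} [NeZero N] {g : ℕ → M} (hper : Periodic g N) (hanti : Antiperiodic g d) :
    ∑ a : ZMod N, g a.val = 0 := by
  refine self_eq_neg.mp ?_
  rw [← Finset.sum_neg_distrib]
  refine Fintype.sum_equiv (Equiv.addRight (d : ZMod N)) _ _ fun a => ?_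
  rw [Equiv.coe_addRight, hper.map_val_add_natCast, hanti, neg_neg]

theorem neg_one_pow_mul_mul_star_neg_one_pow_mul {R : Type*} [Ring R] [StarRing R]
    (k l : ℕ) (x y : R) :
    (-1) ^ k * x * star ((-1) ^ l * y) = (-1) ^ (k + l) * (x * star y) := by
  rcases neg_one_pow_eq_or R k with hk | hk <;> rcases neg_one_pow_eq_or R l with hl | hl <;>
    simp [pow_add, hk, hl]

instance : IsAddTorsionFree (Quaternion ℝ) := .of_module_rat _

theorem qi_mul_qi : qi * qi = -1 := by
  ext <;> simp [Quaternion.re_mul, Quaternion.imI_mul, Quaternion.imJ_mul, Quaternion.imK_mul,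
    Quaternion.re_one, Quaternion.imI_one, Quaternion.imJ_one, Quaternion.imK_one] <;> simp [qi]

theorem qj_mul_qj : qj * qj = -1 := by
  ext <;> simp [Quaternion.re_mul, Quaternion.imI_mul, Quaternion.imJ_mul, Quaternion.imK_mul,
    Quaternion.re_one, Quaternion.imI_one, Quaternion.imJ_one, Quaternion.imK_one] <;> simp [qj]

theorem star_qi : star qi = -qi := Quaternion.star_eq_neg.mpr rfl

theorem qi_pow_two_mul (k : ℕ) : qi ^ (2 * k) = (-1) ^ k := by
  rw [pow_mul, sq, qi_mul_qi]

theorem qj_pow_four_mul (k : ℕ) : qj ^ (4 * k) = 1 := by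
  rw [show 4 * k = 2 * (2 * k) by ring, pow_mul, sq, qj_mul_qj, pow_mul, neg_one_sq, one_pow]

noncomputable def quatSeq (M x : ℕ) : Quaternion ℝ := qi ^ (x ^ 2 / M) * qj ^ (2 * x ^ 2 / M)

section quatSeq

variable {m : ℕ} (hm : 0 < m)
include hm

theorem quatSeq_add_two_mul (x : ℕ) :
    quatSeq (2 * m) (x + 2 * m) = (-1) ^ (x + m) * quatSeq (2 * m) x := by
  have hi : (x + 2 * m) ^ 2 / (2 * m) = x ^ 2 / (2 * m) + 2 * (x + m) := by
    rw [show (x + 2 * m) ^ 2 = x ^ 2 + 2 * (x + m) * (2 * m) by ring,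
      Nat.add_mul_div_right _ _ (by omega)]
  have hj : 2 * (x + 2 * m) ^ 2 / (2 * m) = 2 * x ^ 2 / (2 * m) + 4 * (x + m) := by
    rw [show 2 * (x + 2 * m) ^ 2 = 2 * x ^ 2 + 4 * (x + m) * (2 * m) by ring,
      Nat.add_mul_div_right _ _ (by omega)]
  rw [quatSeq, quatSeq, hi, hj, pow_add, pow_add, qi_pow_two_mul, qj_pow_four_mul, mul_one,
    ((Commute.neg_one_right _).pow_right _).eq, mul_assoc]

theorem quatSeq_periodic : Periodic (quatSeq (2 * m)) (4 * m) := by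
  intro x
  rw [show x + 4 * m = x + 2 * m + 2 * m by ring, quatSeq_add_two_mul hm, quatSeq_add_two_mul hm,
    ← mul_assoc, ← pow_add, show x + 2 * m + m + (x + m) = 2 * (x + 2 * m) by ring, pow_mul,
    neg_one_sq, one_pow, one_mul]

theorem quatSeq_mul_star_antiperiodic {t : ℕ} (ht : Odd t) :
    Antiperiodic (fun x => quatSeq (2 * m) x * star (quatSeq (2 * m) (x + t))) (2 * m) := by
  intro x
  have hodd : Odd (x + m + (x + t + m)) := by
    rw [show x + m + (x + t + m) = 2 * (x + m) + t by ring]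
    exact (even_two_mul _).add_odd ht
  simp only [add_right_comm x (2 * m) t, quatSeq_add_two_mul hm,
    neg_one_pow_mul_mul_star_neg_one_pow_mul, hodd.neg_one_pow, neg_one_mul]

end quatSeq

theorem quatseq_odd_shift_autocorrelation_zero_general (n : ℕ)
    (s : ZMod (2 ^ n) → Quaternion ℝ)
    (hs : ∀ a : ZMod (2 ^ n),
      s a = qi ^ (a.val ^ 2 / 2 ^ (n - 1)) * qj ^ (2 * a.val ^ 2 / 2 ^ (n - 1)))
    (τ : ZMod (2 ^ n)) (hτ : Odd τ.val) :
    ∑ a : ZMod (2 ^ n), s a * star (s (a + τ)) = 0 := by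
  match n with
  | 0 => exact absurd hτ (by rw [Nat.lt_one_iff.mp (ZMod.val_lt τ)]; decide)
  | 1 =>
    have h0 : s 0 = 1 := by simp [hs]
    have h1 : s 1 = -qi := by simp [hs, ZMod.val_one, pow_two, qj_mul_qj]
    obtain rfl : τ = 1 := by
      fin_cases τ
      · exact absurd hτ (by decide)
      · rfl
    rw [show (Finset.univ : Finset (ZMod (2 ^ 1))) = {0, 1} from rfl, Finset.sum_pair (by decide),
      show (1 + 1 : ZMod (2 ^ 1)) = 0 from rfl, zero_add, h0, h1]
    simp [star_qi]
  | k + 2 =>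
    set m := 2 ^ k
    have hs' : ∀ a, s a = quatSeq (2 * m) a.val := by
      intro a
      rw [hs, quatSeq, show 2 ^ (k + 2 - 1) = 2 * m from pow_succ' 2 k]
    have hper : Periodic (quatSeq (2 * m)) (2 ^ (k + 2)) := by
      rw [show 2 ^ (k + 2) = 4 * m by ring]; exact quatSeq_periodic (by positivity)
    calc ∑ a, s a * star (s (a + τ))
        = ∑ a : ZMod (2 ^ (k + 2)),
            quatSeq (2 * m) a.val * star (quatSeq (2 * m) (a.val + τ.val)) := by
          simp only [hs', ← hper.map_val_add_natCast, ZMod.natCast_zmod_val]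
      _ = 0 := ZMod.sum_val_eq_zero_of_antiperiodic (hper.mul ((hper.add_const _).comp star))
          (quatSeq_mul_star_antiperiodic (by positivity) hτ)

theorem quatseq_odd_shift_autocorrelation_zero (n : ℕ) (hn : 1 ≤ n)
    (s : ZMod (2 ^ n) → Quaternion ℝ)
    (hs : ∀ a : ZMod (2 ^ n),
      s a = qi ^ (a.val ^ 2 / 2 ^ (n - 1)) * qj ^ (2 * a.val ^ 2 / 2 ^ (n - 1)))
    (τ : ZMod (2 ^ n)) (hτ : Odd τ.val) :
    ∑ a : ZMod (2 ^ n), s a * star (s (a + τ)) = 0 :=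
  quatseq_odd_shift_autocorrelation_zero_general n s hs τ hτ
end

section
/- For each n with 1 ≤ n ≤ 6, the sequence s : ZMod (2^n) → H defined by s(a) = i^⌊a.val²/2^(n−1)⌋ · j^⌊2·a.val²/2^(n−1)⌋ is perfect: for every τ ∈ ZMod (2^n) with τ ≠ 0, Σ_{a ∈ ZMod (2^n)} s(a)·(s(a+τ))* = 0. -/
/-! Since i⁴ = j⁴ = 1, only the exponents mod 4 matter, so `s` is the image under `ℤ → ℝ` of a
sequence of integer quaternions with values in the quaternion group {±1, ±i, ±j, ±k}. Ring maps
commuting with conjugation carry autocorrelations to autocorrelations, so it suffices that the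
integer sequence is perfect, which for each of the finitely many lengths 2ⁿ, n ≤ 6, is a finite
computation in `ℍ[ℤ]` checked by `decide`. -/

open scoped Quaternion

namespace Quaternion

instance instDecidableEq {R : Type*} [Zero R] [One R] [Neg R] [DecidableEq R] :
    DecidableEq ℍ[R] :=
  (QuaternionAlgebra.equivProd _ _ _).decidableEq

variable {R S : Type*} [CommRing R] [CommRing S]

def map (f : R →+* S) : ℍ[R] →+* ℍ[S] where
  toFun q := ⟨f q.re, f q.imI, f q.imJ, f q.imK⟩
  map_one' := by ext <;> simp
  map_mul' p q := by
    -- anonymous constructors elaborate at `ℍ[S,-1,-1]`, out of reach of the `Quaternion` lemmas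
    change (⟨_, _, _, _⟩ : ℍ[S]) = (⟨_, _, _, _⟩ : ℍ[S]) * ⟨_, _, _, _⟩
    ext <;> simp [re_mul, imI_mul, imJ_mul, imK_mul] <;> ring
  map_zero' := by ext <;> simp
  map_add' p q := by
    change (⟨_, _, _, _⟩ : ℍ[S]) = (⟨_, _, _, _⟩ : ℍ[S]) + ⟨_, _, _, _⟩
    ext <;> simp

@[simp] theorem re_map (f : R →+* S) (q : ℍ[R]) : (map f q).re = f q.re := rfl
@[simp] theorem imI_map (f : R →+* S) (q : ℍ[R]) : (map f q).imI = f q.imI := rfl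
@[simp] theorem imJ_map (f : R →+* S) (q : ℍ[R]) : (map f q).imJ = f q.imJ := rfl
@[simp] theorem imK_map (f : R →+* S) (q : ℍ[R]) : (map f q).imK = f q.imK := rfl

theorem map_star (f : R →+* S) (q : ℍ[R]) : map f (star q) = star (map f q) := by
  ext <;> simp

end Quaternion

section Autocorrelation

variable {R S : Type*} [Semiring R] [Star R] [Semiring S] [Star S] {N : ℕ} [NeZero N]

def autocorrelation (s : ZMod N → R) (τ : ZMod N) : R :=
  ∑ a, s a * star (s (a + τ))

def IsPerfect (s : ZMod N → R) : Prop :=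
  ∀ τ, τ ≠ 0 → autocorrelation s τ = 0

theorem map_autocorrelation (f : R →+* S) (hf : ∀ x, f (star x) = star (f x))
    (s : ZMod N → R) (τ : ZMod N) : f (autocorrelation s τ) = autocorrelation (f ∘ s) τ := by
  simp [autocorrelation, map_sum, hf]

theorem IsPerfect.map {s : ZMod N → R} (hs : IsPerfect s) (f : R →+* S)
    (hf : ∀ x, f (star x) = star (f x)) : IsPerfect (f ∘ s) := fun τ hτ => by
  rw [← map_autocorrelation f hf, hs τ hτ, map_zero]

end Autocorrelation

theorem qi_sq : qi ^ 2 = -1 := by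
  rw [Quaternion.sq_eq_neg_normSq.mpr rfl, Quaternion.normSq_def']
  simp [qi]

theorem qj_sq : qj ^ 2 = -1 := by
  rw [Quaternion.sq_eq_neg_normSq.mpr rfl, Quaternion.normSq_def']
  simp [qj]

theorem qi_pow_four : qi ^ 4 = 1 := by rw [show 4 = 2 * 2 from rfl, pow_mul, qi_sq, neg_one_sq]

theorem qj_pow_four : qj ^ 4 = 1 := by rw [show 4 = 2 * 2 from rfl, pow_mul, qj_sq, neg_one_sq]

def zi : ℍ[ℤ] := ⟨0, 1, 0, 0⟩

def zj : ℍ[ℤ] := ⟨0, 0, 1, 0⟩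

theorem map_zi : Quaternion.map (Int.castRingHom ℝ) zi = qi := by
  ext <;> simp only [Quaternion.re_map, Quaternion.imI_map, Quaternion.imJ_map, Quaternion.imK_map]
    <;> simp [zi, qi]

theorem map_zj : Quaternion.map (Int.castRingHom ℝ) zj = qj := by
  ext <;> simp only [Quaternion.re_map, Quaternion.imI_map, Quaternion.imJ_map, Quaternion.imK_map]
    <;> simp [zj, qj]

-- The exponents are reduced mod 4 so that `decide` only ever multiplies short words.
def intQuatSeq (n : ℕ) (a : ZMod (2 ^ n)) : ℍ[ℤ] :=
  zi ^ (a.val ^ 2 / 2 ^ (n - 1) % 4) * zj ^ (2 * a.val ^ 2 / 2 ^ (n - 1) % 4)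

set_option maxRecDepth 10000 in
theorem intQuatSeq_isPerfect {n : ℕ} (hn : n ≤ 6) : IsPerfect (intQuatSeq n) := by
  unfold IsPerfect autocorrelation
  interval_cases n <;> decide +kernel

theorem map_intQuatSeq (n : ℕ) (a : ZMod (2 ^ n)) :
    Quaternion.map (Int.castRingHom ℝ) (intQuatSeq n a) =
      qi ^ (a.val ^ 2 / 2 ^ (n - 1)) * qj ^ (2 * a.val ^ 2 / 2 ^ (n - 1)) := by
  rw [intQuatSeq, map_mul, map_pow, map_pow, map_zi, map_zj, ← pow_eq_pow_mod _ qi_pow_four,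
    ← pow_eq_pow_mod _ qj_pow_four]

theorem quatseq_perfect_general (n : ℕ) (hn6 : n ≤ 6)
    (s : ZMod (2 ^ n) → Quaternion ℝ)
    (hs : ∀ a : ZMod (2 ^ n),
      s a = qi ^ (a.val ^ 2 / 2 ^ (n - 1)) * qj ^ (2 * a.val ^ 2 / 2 ^ (n - 1)))
    (τ : ZMod (2 ^ n)) (hτ : τ ≠ 0) :
    ∑ a : ZMod (2 ^ n), s a * star (s (a + τ)) = 0 := by
  obtain rfl : s = Quaternion.map (Int.castRingHom ℝ) ∘ intQuatSeq n :=
    funext fun a => (hs a).trans (map_intQuatSeq n a).symm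
  exact (intQuatSeq_isPerfect hn6).map _ (Quaternion.map_star _) τ hτ

theorem quatseq_perfect (n : ℕ) (hn1 : 1 ≤ n) (hn6 : n ≤ 6)
    (s : ZMod (2 ^ n) → Quaternion ℝ)
    (hs : ∀ a : ZMod (2 ^ n),
      s a = qi ^ (a.val ^ 2 / 2 ^ (n - 1)) * qj ^ (2 * a.val ^ 2 / 2 ^ (n - 1)))
    (τ : ZMod (2 ^ n)) (hτ : τ ≠ 0) :
    ∑ a : ZMod (2 ^ n), s a * star (s (a + τ)) = 0 :=
  quatseq_perfect_general n hn6 s hs τ hτ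
end

section
/- Let n ≥ 2 and let s : ZMod n → H be a sequence all of whose values lie in the set {i, −i, j, −j, k, −k}. If s is perfect, i.e. Σ_{a ∈ ZMod n} s(a)·(s(a+τ))* = 0 for every τ ∈ ZMod n with τ ≠ 0, then n is even. -/
/-!
Put `t a = s a * (s (a + 1))*`. A product of two elements of `{±i, ±j, ±k}` lies in the
quaternion group `{±1, ±i, ±j, ±k}`, so the sum of the four coordinates of `t a` is `±1`.
Perfection at the shift `1` gives `∑ a, t a = 0`; applying the (linear) coordinate sum,
`n` terms equal to `±1` add up to `0`, which forces `n` to be even.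
-/

open Finset QuaternionAlgebra

namespace Quaternion

def coordSum : Quaternion ℝ →ₗ[ℝ] ℝ := reₗ _ _ _ + imIₗ _ _ _ + imJₗ _ _ _ + imKₗ _ _ _

lemma coordSum_apply (q : Quaternion ℝ) : coordSum q = q.re + q.imI + q.imJ + q.imK := rfl

lemma coordSum_mul_star_eq_one_or_neg_one {x y : Quaternion ℝ}
    (hx : x ∈ ({qi, -qi, qj, -qj, qk, -qk} : Set (Quaternion ℝ)))
    (hy : y ∈ ({qi, -qi, qj, -qj, qk, -qk} : Set (Quaternion ℝ))) :
    coordSum (x * star y) = 1 ∨ coordSum (x * star y) = -1 := by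
  simp only [Set.mem_insert_iff, Set.mem_singleton_iff] at hx hy
  rcases hx with hx | hx | hx | hx | hx | hx <;>
    rcases hy with hy | hy | hy | hy | hy | hy <;>
    simp [hx, hy, coordSum_apply, re_mul, imI_mul, imJ_mul, imK_mul] <;> norm_num [qi, qj, qk]

end Quaternion

lemma Fintype.even_card_of_sum_eq_zero {α R : Type*} [Fintype α] [Ring R] [CharZero R]
    {f : α → R} (hf : ∀ a, f a = 1 ∨ f a = -1) (hsum : ∑ a, f a = 0) : Even (Fintype.card α) := by
  classical
  have hcard : (Fintype.card α : R) = 2 * #{a | f a = -1} :=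
    calc (Fintype.card α : R) = ∑ a, (1 - f a) := by simp [sum_sub_distrib, hsum]
      _ = ∑ a, if f a = -1 then 2 else 0 := by
        refine Finset.sum_congr rfl fun a _ => ?_
        rcases hf a with h | h <;> norm_num [h]
      _ = 2 * #{a | f a = -1} := by rw [sum_ite, sum_const_zero, sum_const]; simp [Nat.cast_comm]
  exact even_iff_two_dvd.mpr ⟨_, by exact_mod_cast hcard⟩

theorem perfect_pure_imaginary_seq_even_length (n : ℕ) [NeZero n] (hn : 2 ≤ n)
    (s : ZMod n → Quaternion ℝ)
    (hvals : ∀ a : ZMod n, s a ∈ ({qi, -qi, qj, -qj, qk, -qk} : Set (Quaternion ℝ)))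
    (hperf : ∀ τ : ZMod n, τ ≠ 0 → ∑ a : ZMod n, s a * star (s (a + τ)) = 0) :
    Even n := by
  have : Fact (1 < n) := ⟨hn⟩
  have hsum : ∑ a, Quaternion.coordSum (s a * star (s (a + 1))) = 0 := by
    rw [← map_sum, hperf 1 one_ne_zero, map_zero]
  simpa using Fintype.even_card_of_sum_eq_zero
    (fun a => Quaternion.coordSum_mul_star_eq_one_or_neg_one (hvals a) (hvals (a + 1))) hsum
end

section
/- Let s : ZMod 9 → H be the sequence [1+j, 1+j, 1+j, 1+j, (−1+√3·i−j+√3·k)/2, (−1−√3·i−j−√3·k)/2, 1+j, (−1−√3·i−j−√3·k)/2, (−1+√3·i−j+√3·k)/2]. Then s is perfect: Σ_{a ∈ ZMod 9} s(a)·(s(a+τ))* = 0 for every τ ∈ ZMod 9 with τ ≠ 0. -/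
noncomputable def leukhinA : Quaternion ℝ := 1 + qj
noncomputable def leukhinB : Quaternion ℝ :=
  (1 / 2 : ℝ) • (-1 + Real.sqrt 3 • qi - qj + Real.sqrt 3 • qk)
noncomputable def leukhinC : Quaternion ℝ :=
  (1 / 2 : ℝ) • (-1 - Real.sqrt 3 • qi - qj - Real.sqrt 3 • qk)

/-!
With `ω = (-1 + √3 i) / 2` one has `B = ω (1 + j)` and `C = ω² (1 + j)`, so `s a = ω^(e a) (1 + j)` where
`e (3u + v) = uv`: the sequence is the Frank sequence of length 9, which lies in `ℂ = ℝ + ℝ i ⊆ ℍ`,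
multiplied on the right by `1 + j`. As `(1 + j)(1 + j)* = 2` is real, the quaternion autocorrelation is
twice the autocorrelation `∑ ω^(e a - e (a + τ))` of the Frank sequence. For `τ ≠ 0` the phase difference
`e a - e (a + τ)` takes every value in `ZMod 3` exactly three times, and the cube roots of unity sum to
zero.
-/

open Quaternion Finset ComplexConjugate

lemma AddChar.sum_comp_eq_zero_of_card_fiber_eq {ι G R : Type*} [Fintype ι] [AddGroup G]
    [Fintype G] [DecidableEq G] [CommRing R] [IsDomain R] {ψ : AddChar G R} (hψ : ψ ≠ 1)
    (g : ι → G) (c : ℕ) (hg : ∀ x, #{i | g i = x} = c) : ∑ i, ψ (g i) = 0 := by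
  rw [← sum_fiberwise univ g]
  calc ∑ x, ∑ i with g i = x, ψ (g i) = ∑ x, c • ψ x := by
        refine sum_congr rfl fun x _ => ?_
        rw [sum_congr rfl fun i hi => by rw [(mem_filter.1 hi).2], sum_const, hg]
    _ = 0 := by rw [← smul_sum, AddChar.sum_eq_zero_of_ne_one hψ, smul_zero]

lemma Quaternion.coeComplex_mul_star_coeComplex (z w : ℂ) :
    (z : ℍ[ℝ]) * star (w : ℍ[ℝ]) = ((z * conj w : ℂ) : ℍ[ℝ]) := by
  ext <;> simp

lemma Quaternion.mul_mul_star_mul (x y q : ℍ[ℝ]) :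
    x * q * star (y * q) = normSq q • (x * star y) := by
  rw [star_mul, mul_assoc, ← mul_assoc q, self_mul_star, coe_mul_eq_smul, mul_smul_comm]

noncomputable def primitiveCubeRoot : ℂ := ⟨-1 / 2, √3 / 2⟩

lemma primitiveCubeRoot_sq : primitiveCubeRoot ^ 2 = ⟨-1 / 2, -(√3 / 2)⟩ := by
  have h3 : √3 * √3 = 3 := Real.mul_self_sqrt (by norm_num)
  apply Complex.ext <;> simp only [primitiveCubeRoot, sq, Complex.mul_re, Complex.mul_im] <;> linarith

lemma primitiveCubeRoot_pow_three : primitiveCubeRoot ^ 3 = 1 := by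
  have h3 : √3 * √3 = 3 := Real.mul_self_sqrt (by norm_num)
  rw [pow_succ, primitiveCubeRoot_sq]
  apply Complex.ext <;>
    simp only [primitiveCubeRoot, Complex.mul_re, Complex.mul_im, Complex.one_re, Complex.one_im] <;>
    linarith

lemma primitiveCubeRoot_ne_one : primitiveCubeRoot ≠ 1 := by
  intro h
  norm_num [primitiveCubeRoot, Complex.ext_iff] at h

noncomputable def cubeChar : AddChar (ZMod 3) ℂ :=
  AddChar.zmodChar 3 primitiveCubeRoot_pow_three

lemma cubeChar_apply (k : ZMod 3) : cubeChar k = primitiveCubeRoot ^ k.val := rfl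

lemma cubeChar_ne_one : cubeChar ≠ 1 := by
  rw [AddChar.zmod_char_ne_one_iff, cubeChar_apply, ZMod.val_one, pow_one]
  exact primitiveCubeRoot_ne_one

lemma cubeChar_mul_conj (x y : ZMod 3) : cubeChar x * conj (cubeChar y) = cubeChar (x - y) := by
  rw [← AddChar.map_neg_eq_conj, ← AddChar.map_add_eq_mul, sub_eq_add_neg]

def frankPhase (a : ZMod 9) : ZMod 3 := (a.val / 3 : ℕ) * (a.val : ZMod 3)

lemma card_frankPhase_sub_eq (τ : ZMod 9) (hτ : τ ≠ 0) (x : ZMod 3) :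
    #{a | frankPhase a - frankPhase (a + τ) = x} = 3 := by
  revert τ x; decide

theorem frank_autocorrelation_eq_zero (τ : ZMod 9) (hτ : τ ≠ 0) :
    ∑ a, cubeChar (frankPhase a) * conj (cubeChar (frankPhase (a + τ))) = 0 := by
  simp_rw [cubeChar_mul_conj]
  exact AddChar.sum_comp_eq_zero_of_card_fiber_eq cubeChar_ne_one _ 3 (card_frankPhase_sub_eq τ hτ)

lemma half_smul_eq_coeComplex_mul_leukhinA (t : ℝ) :
    (1 / 2 : ℝ) • (-1 + t • qi - qj + t • qk) = ((⟨-1 / 2, t / 2⟩ : ℂ) : ℍ[ℝ]) * leukhinA := by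
  ext <;> simp only [leukhinA, re_add, imI_add, imJ_add, imK_add, re_sub, imI_sub, imJ_sub, imK_sub,
    re_neg, imI_neg, imJ_neg, imK_neg, re_one, imI_one, imJ_one, imK_one, re_smul, imI_smul, imJ_smul,
    imK_smul, re_mul, imI_mul, imJ_mul, imK_mul, re_coeComplex, imI_coeComplex, imJ_coeComplex,
    imK_coeComplex, smul_eq_mul] <;>
    simp only [qi, qj, qk] <;> ring

lemma leukhinB_eq : leukhinB = (primitiveCubeRoot : ℍ[ℝ]) * leukhinA :=
  half_smul_eq_coeComplex_mul_leukhinA √3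

lemma leukhinC_eq : leukhinC = ((primitiveCubeRoot ^ 2 : ℂ) : ℍ[ℝ]) * leukhinA := by
  have h := half_smul_eq_coeComplex_mul_leukhinA (-√3)
  rw [neg_smul, neg_smul, ← sub_eq_add_neg, ← sub_eq_add_neg, neg_div 2 √3] at h
  rw [leukhinC, h, primitiveCubeRoot_sq]

lemma frankPhase_eq (a : ZMod 9) :
    frankPhase a = ![0, 0, 0, 0, 1, 2, 0, 2, 1] ⟨a.val, a.val_lt⟩ := by
  revert a; decide

lemma leukhin_seq_eq_frank (a : ZMod 9) :
    ![leukhinA, leukhinA, leukhinA, leukhinA, leukhinB, leukhinC,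
        leukhinA, leukhinC, leukhinB] ⟨a.val, a.val_lt⟩ =
      (cubeChar (frankPhase a) : ℍ[ℝ]) * leukhinA := by
  rw [frankPhase_eq]
  generalize (⟨a.val, a.val_lt⟩ : Fin 9) = i
  fin_cases i <;>
    simp [cubeChar_apply, ZMod.val_one, ZMod.val_two_eq_two_mod, leukhinB_eq, leukhinC_eq]

theorem leukhin_perfect_seq_length9 (s : ZMod 9 → Quaternion ℝ)
    (hs : ∀ a : ZMod 9,
      s a = ![leukhinA, leukhinA, leukhinA, leukhinA, leukhinB, leukhinC,
        leukhinA, leukhinC, leukhinB] ⟨a.val, a.val_lt⟩)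
    (τ : ZMod 9) (hτ : τ ≠ 0) :
    ∑ a : ZMod 9, s a * star (s (a + τ)) = 0 := by
  calc ∑ a, s a * star (s (a + τ))
      = normSq leukhinA •
          ofComplex (∑ a, cubeChar (frankPhase a) * conj (cubeChar (frankPhase (a + τ)))) := by
        simp_rw [hs, leukhin_seq_eq_frank, mul_mul_star_mul, coeComplex_mul_star_coeComplex,
          map_sum, coe_ofComplex, smul_sum]
    _ = 0 := by rw [frank_autocorrelation_eq_zero τ hτ, map_zero, smul_zero]
end
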